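/- A rank-one positive semidefinite moment matrix certifies a representing point: if M is a real symmetric positive semidefinite matrix indexed by Fin (k+1) with rank M = 1 and M 0 0 = 1, then there exists x : Fin (k+1) → ℝ with x 0 = 1 and M i j = x i · x j for all i, j; consequently the linear functional determined by the entries of M acts as evaluation at the point (x 1, …, x k) on all polynomials of degree at most 2. -/
import Mathlib


/-- A rank-one positive semidefinite moment matrix certifies a
representing point: if `M` is a real symmetric positive semidefinite matrix indexed by
`Fin (k+1)` with `rank M = 1` and `M 0 0 = 1`, then there exists `x : Fin (k+1) → ℝ` with
`x 0 = 1` and `M i j = x i * x j` for all `i, j`; consequently the linear functional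
determined by the entries of `M` acts as evaluation at the point `(x 1, …, x k)` on all
polynomials of degree at most 2 (encoded here by quadratic forms in `(1, x 1, …, x k)`,
i.e. arbitrary coefficient matrices `c`). -/
theorem rank_one_moment_matrix_representing_point
    (k : ℕ) (M : Matrix (Fin (k + 1)) (Fin (k + 1)) ℝ)
    (hsymm : M.IsSymm) (hpsd : M.PosSemidef) (hrank : M.rank = 1)
    (h00 : M 0 0 = 1) :
    ∃ x : Fin (k + 1) → ℝ, x 0 = 1 ∧ (∀ i j, M i j = x i * x j) ∧
      ∀ c : Matrix (Fin (k + 1)) (Fin (k + 1)) ℝ,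
        ∑ i, ∑ j, c i j * M i j = ∑ i, ∑ j, c i j * (x i * x j) := by
  set W := LinearMap.range M.mulVecLin with hW
  have hfin : Module.finrank ℝ W = 1 := hrank
  set v : Fin (k + 1) → ℝ := fun i => M i 0 with hvdef
  have hcol : ∀ j, (fun i => M i j) ∈ W := by
    intro j
    refine ⟨Pi.single j 1, ?_⟩
    ext i
    simp [Matrix.mulVecLin, Matrix.mulVec, dotProduct, Pi.single_apply]
  have hv : v ∈ W := hcol 0
  have hv0 : v ≠ 0 := fun h => by simpa [hvdef, h00] using congrFun h 0
  have hspan : Submodule.span ℝ {v} = W := by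
    apply Submodule.eq_of_le_of_finrank_eq ((Submodule.span_singleton_le_iff_mem _ _).2 hv)
    rw [hfin, finrank_span_singleton hv0]
  have key : ∀ i j, M i j = v i * v j := by
    intro i j
    have hcj := hcol j
    rw [← hspan] at hcj
    obtain ⟨c, hc⟩ := Submodule.mem_span_singleton.1 hcj
    have h0 : c = M 0 j := by
      have := congrFun hc 0
      simpa [hvdef, h00] using this
    have hi := congrFun hc i
    have hsy : M 0 j = M j 0 := by
      have := congrFun (congrFun hsymm j) (0 : Fin (k + 1))
      simpa [Matrix.transpose_apply] using this
    simp only [Pi.smul_apply, smul_eq_mul] at hi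
    rw [← hi, h0, hsy, hvdef]
    ring
  exact ⟨v, h00, key, fun c => by simp only [key]⟩
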